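/- Let δ ≥ 0 and let X be a δ-hyperbolic geodesic metric space. Let ζ be a geodesic segment in X, let x and y be points of X, let x' be a nearest point to x on ζ and let y' be a nearest point to y on ζ. Then dist x' y' ≤ dist x y + 12δ. (Proposition 5.3(ii) of the paper: nearest-point projection onto a geodesic is coarsely 1-Lipschitz.) -/
import Mathlib


/-- A subset `G` of a metric space is a geodesic segment with endpoints `x` and `y`
if it is the image of an isometric parametrization of a real interval `[a,b]`
with `γ a = x` and `γ b = y`. -/
def IsGeodesicSegmentBetween {X : Type*} [MetricSpace X] (G : Set X) (x y : X) : Prop :=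
  ∃ (a b : ℝ) (γ : ℝ → X), a ≤ b ∧
    (∀ s ∈ Set.Icc a b, ∀ t ∈ Set.Icc a b, dist (γ s) (γ t) = |s - t|) ∧
    γ '' Set.Icc a b = G ∧ γ a = x ∧ γ b = y

/-- A geodesic segment is a geodesic segment between some pair of endpoints. -/
def IsGeodesicSegment {X : Type*} [MetricSpace X] (G : Set X) : Prop :=
  ∃ x y : X, IsGeodesicSegmentBetween G x y

/-- A metric space is geodesic if any two points are the endpoints of some
geodesic segment. -/
def GeodesicMetricSpace (X : Type*) [MetricSpace X] : Prop :=
  ∀ x y : X, ∃ G : Set X, IsGeodesicSegmentBetween G x y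

/-- `δ`-hyperbolicity via thin triangles: each side of any geodesic triangle is
contained in the closed `δ`-neighborhood of the union of the other two sides. -/
def IsDeltaHyperbolic (X : Type*) [MetricSpace X] (δ : ℝ) : Prop :=
  ∀ (x y z : X) (G₁ G₂ G₃ : Set X),
    IsGeodesicSegmentBetween G₁ x y → IsGeodesicSegmentBetween G₂ y z →
      IsGeodesicSegmentBetween G₃ x z →
        (∀ p ∈ G₁, ∃ q ∈ G₂ ∪ G₃, dist p q ≤ δ) ∧
        (∀ p ∈ G₂, ∃ q ∈ G₁ ∪ G₃, dist p q ≤ δ) ∧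
        (∀ p ∈ G₃, ∃ q ∈ G₁ ∪ G₂, dist p q ≤ δ)

/-- `a` is a nearest point to `x` on the subset `A`. -/
def IsNearestPointOn {X : Type*} [MetricSpace X] (x : X) (A : Set X) (a : X) : Prop :=
  a ∈ A ∧ ∀ p ∈ A, dist x a ≤ dist x p

open Set Metric

lemma seg_endpoint_left {X : Type*} [MetricSpace X] {G : Set X} {x y : X}
    (h : IsGeodesicSegmentBetween G x y) : x ∈ G := by
  obtain ⟨a, b, γ, hab, -, himg, hx, -⟩ := h
  rw [← himg, ← hx]
  exact mem_image_of_mem _ ⟨le_refl a, hab⟩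

lemma seg_continuousOn {X : Type*} [MetricSpace X] {a b : ℝ} {γ : ℝ → X}
    (hiso : ∀ s ∈ Set.Icc a b, ∀ t ∈ Set.Icc a b, dist (γ s) (γ t) = |s - t|) :
    ContinuousOn γ (Set.Icc a b) := by
  have : LipschitzOnWith 1 γ (Set.Icc a b) := by
    apply LipschitzOnWith.of_dist_le_mul
    intro s hs t ht
    rw [hiso s hs t ht]
    simp [Real.dist_eq]
  exact this.continuousOn

lemma seg_compact {X : Type*} [MetricSpace X] {G : Set X} {x y : X}
    (h : IsGeodesicSegmentBetween G x y) : IsCompact G := by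
  obtain ⟨a, b, γ, hab, hiso, himg, -, -⟩ := h
  rw [← himg]
  exact isCompact_Icc.image_of_continuousOn (seg_continuousOn hiso)

lemma exists_subsegment {X : Type*} [MetricSpace X] {ζ : Set X}
    (hζ : IsGeodesicSegment ζ) {u v : X} (hu : u ∈ ζ) (hv : v ∈ ζ) :
    ∃ G : Set X, G ⊆ ζ ∧ IsGeodesicSegmentBetween G u v := by
  obtain ⟨e1, e2, a, b, γ, hab, hiso, himg, -, -⟩ := hζ
  rw [← himg] at hu hv
  obtain ⟨s, hs, rfl⟩ := hu
  obtain ⟨t, ht, rfl⟩ := hv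
  rcases le_total s t with h | h
  · refine ⟨γ '' Icc s t, ?_, s, t, γ, h, ?_, rfl, rfl, rfl⟩
    · rw [← himg]; exact image_mono (Icc_subset_Icc hs.1 ht.2)
    · intro u hu w hw
      exact hiso u (Icc_subset_Icc hs.1 ht.2 hu) w (Icc_subset_Icc hs.1 ht.2 hw)
  · have hsub : Icc t s ⊆ Icc a b := Icc_subset_Icc ht.1 hs.2
    refine ⟨γ '' Icc t s, ?_, t, s, fun r => γ (s + t - r), h, ?_, ?_, ?_, ?_⟩
    · rw [← himg]; exact image_mono hsub
    · intro u hu w hw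
      have h1 : s + t - u ∈ Icc a b := hsub ⟨by linarith [hu.2], by linarith [hu.1]⟩
      have h2 : s + t - w ∈ Icc a b := hsub ⟨by linarith [hw.2], by linarith [hw.1]⟩
      rw [hiso _ h1 _ h2]
      rw [show s + t - u - (s + t - w) = -(u - w) by ring, abs_neg]
    · have : (fun r => γ (s + t - r)) '' Icc t s = γ '' ((fun r => s + t - r) '' Icc t s) := by
        rw [← image_comp]; rfl
      rw [this, show (fun r => s + t - r) '' Icc t s = Icc t s by
        rw [show (fun r => s + t - r) = (fun r => (s+t) - r) from rfl, Set.image_const_sub_Icc]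
        congr 1 <;> ring]
    · show γ (s + t - t) = γ s; congr 1; ring
    · show γ (s + t - s) = γ t; congr 1; ring

lemma nearest_point_gate {X : Type*} [MetricSpace X] (δ : ℝ) (hδ : 0 ≤ δ)
    (hgeo : GeodesicMetricSpace X) (hhyp : IsDeltaHyperbolic X δ)
    (ζ : Set X) (hζ : IsGeodesicSegment ζ)
    (x x' : X) (hx' : IsNearestPointOn x ζ x')
    (p : X) (hp : p ∈ ζ) :
    dist x x' + dist x' p ≤ dist x p + 4 * δ := by
  obtain ⟨hx'mem, hnear⟩ := hx'
  obtain ⟨G₂, hG₂sub, hG₂⟩ := exists_subsegment hζ hx'mem hp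
  obtain ⟨G₁, hG₁⟩ := hgeo x x'
  obtain ⟨G₃, hG₃⟩ := hgeo x p
  obtain ⟨-, -, hthin⟩ := hhyp x x' p G₁ G₂ G₃ hG₁ hG₂ hG₃
  have hG₁c : IsCompact G₁ := seg_compact hG₁
  have hG₂c : IsCompact G₂ := seg_compact hG₂
  have hG₁n : G₁.Nonempty := ⟨x, seg_endpoint_left hG₁⟩
  have hG₂n : G₂.Nonempty := ⟨x', seg_endpoint_left hG₂⟩
  obtain ⟨a, b, γ, hab, hiso, himg, hγa, hγb⟩ := hG₃
  have hcont : ContinuousOn γ (Icc a b) := seg_continuousOn hiso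
  set f : ℝ → ℝ := fun t => infDist (γ t) G₁ - infDist (γ t) G₂ with hf
  have hfc : ContinuousOn f (Icc a b) :=
    ((continuous_infDist_pt G₁).comp_continuousOn hcont).sub
      ((continuous_infDist_pt G₂).comp_continuousOn hcont)
  have hmem_a : a ∈ Icc a b := ⟨le_refl a, hab⟩
  have hmem_b : b ∈ Icc a b := ⟨hab, le_refl b⟩
  have h0 : (0:ℝ) ∈ Icc (f a) (f b) := by
    constructor
    · have h1 : infDist (γ a) G₁ = 0 := by
        rw [hγa]; exact infDist_zero_of_mem (seg_endpoint_left hG₁)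
      simp only [hf, h1]
      simp [infDist_nonneg]
    · have h2 : infDist (γ b) G₂ = 0 := by
        rw [hγb]
        obtain ⟨a₂, b₂, γ₂, hab₂, -, himg₂, -, hγb₂⟩ := hG₂
        refine infDist_zero_of_mem ?_
        rw [← himg₂, ← hγb₂]
        exact mem_image_of_mem _ ⟨hab₂, le_refl b₂⟩
      simp only [hf, h2]
      simp [infDist_nonneg]
  obtain ⟨t₀, ht₀, hft₀⟩ := intermediate_value_Icc hab hfc h0
  set z := γ t₀ with hz
  have hzG₃ : z ∈ G₃ := by rw [← himg]; exact mem_image_of_mem _ ht₀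
  obtain ⟨q, hq, hdq⟩ := hthin z hzG₃
  have hboth : infDist z G₁ ≤ δ ∧ infDist z G₂ ≤ δ := by
    have heq : infDist z G₁ = infDist z G₂ := by
      have : f t₀ = 0 := hft₀
      simp only [hf] at this
      linarith
    rcases hq with hq | hq
    · have h : infDist z G₁ ≤ dist z q := infDist_le_dist_of_mem hq
      constructor <;> linarith
    · have h : infDist z G₂ ≤ dist z q := infDist_le_dist_of_mem hq
      constructor <;> linarith
  obtain ⟨aP, haP, haPd⟩ := hG₁c.exists_infDist_eq_dist hG₁n z
  obtain ⟨qP, hqP, hqPd⟩ := hG₂c.exists_infDist_eq_dist hG₂n z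
  have hdza : dist z aP ≤ δ := by rw [← haPd]; exact hboth.1
  have hdzq : dist z qP ≤ δ := by rw [← hqPd]; exact hboth.2
  -- distances along G₃
  have hdxz : dist x z = t₀ - a := by
    rw [← hγa, hiso a hmem_a t₀ ht₀, abs_of_nonpos (by linarith [ht₀.1])]; ring
  have hdzp : dist z p = b - t₀ := by
    rw [← hγb, hiso t₀ ht₀ b hmem_b, abs_of_nonpos (by linarith [ht₀.2])]; ring
  have hdxp : dist x p = b - a := by
    rw [← hγa, ← hγb, hiso a hmem_a b hmem_b, abs_of_nonpos (by linarith)]; ring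
  -- aP lies on G₁ between x and x'
  have h5 : dist x aP + dist aP x' = dist x x' := by
    obtain ⟨a₁, b₁, γ₁, hab₁, hiso₁, himg₁, hγa₁, hγb₁⟩ := hG₁
    rw [← himg₁] at haP
    obtain ⟨s, hs, rfl⟩ := haP
    rw [← hγa₁, ← hγb₁,
      hiso₁ a₁ ⟨le_refl a₁, hab₁⟩ s hs,
      hiso₁ s hs b₁ ⟨hab₁, le_refl b₁⟩,
      hiso₁ a₁ ⟨le_refl a₁, hab₁⟩ b₁ ⟨hab₁, le_refl b₁⟩,
      abs_of_nonpos (by linarith [hs.1]), abs_of_nonpos (by linarith [hs.2]),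
      abs_of_nonpos (by linarith)]
    ring
  have h1 : dist x x' ≤ dist x qP := hnear qP (hG₂sub hqP)
  have t1 : dist x qP ≤ dist x z + dist z qP := dist_triangle x z qP
  have t2 : dist x z ≤ dist x aP + dist aP z := dist_triangle x aP z
  have t3 : dist x' p ≤ dist x' aP + dist aP z + dist z p :=
    le_trans (dist_triangle x' z p) (by linarith [dist_triangle x' aP z])
  have hc1 : dist aP z = dist z aP := dist_comm aP z
  have hc2 : dist x' aP = dist aP x' := dist_comm x' aP
  linarith

/-- Proposition 5.3(ii): nearest-point projection onto a geodesic segment is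
coarsely `1`-Lipschitz: `dist x' y' ≤ dist x y + 12δ`. -/
theorem nearest_point_projection_coarse_lipschitz
    {X : Type*} [MetricSpace X] (δ : ℝ) (hδ : 0 ≤ δ)
    (hgeo : GeodesicMetricSpace X) (hhyp : IsDeltaHyperbolic X δ)
    (ζ : Set X) (hζ : IsGeodesicSegment ζ)
    (x y x' y' : X)
    (hx' : IsNearestPointOn x ζ x') (hy' : IsNearestPointOn y ζ y') :
    dist x' y' ≤ dist x y + 12 * δ := by
  have hA := nearest_point_gate δ hδ hgeo hhyp ζ hζ x x' hx' y' hy'.1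
  have hB := nearest_point_gate δ hδ hgeo hhyp ζ hζ y y' hy' x' hx'.1
  have t1 : dist x y' ≤ dist x y + dist y y' := dist_triangle x y y'
  have t2 : dist y x' ≤ dist y x + dist x x' := dist_triangle y x x'
  have c1 : dist y x = dist x y := dist_comm y x
  have c2 : dist y' x' = dist x' y' := dist_comm y' x'
  linarith
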